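/- arXiv:2101.10615 — 3 statements merged into one kernel-verified Lean document; each statement's English description precedes it below -/
import Mathlib

section
/- Let f be a real analytic function on [0,T] that is not identically zero, with distinct zeros t_1,...,t_m in [0,T] of orders d_1,...,d_m respectively, and let β = max_j d_j. Then there exists a constant C > 0 such that |f(t)| ≥ C · min_{1≤j≤m} |t - t_j|^β for all t ∈ [0,T]. -/
/-!
Near a zero `t_j`, `f` agrees on `[0,T]` with a function `g` analytic at `t_j`. The order of
vanishing of `g` at `t_j` is at most `d_j ≤ β`, so `g(s) = (s - t_j)^n u(s)` with `n ≤ β` and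
`u(t_j) ≠ 0`, whence `|f(s)| ≥ c |s - t_j|^β` near `t_j`. Away from the zeros `|f|` is bounded
below by continuity, and compactness of `[0,T]` turns these finitely many local bounds into a
global one.
-/

open Set Filter Topology

theorem IsCompact.exists_pos_mul_le {X : Type*} [TopologicalSpace X] {K : Set X}
    (hK : IsCompact K) {F G : X → ℝ} (hG : ∀ x ∈ K, 0 ≤ G x)
    (hloc : ∀ x ∈ K, ∃ c > 0, ∀ᶠ z in 𝓝[K] x, c * G z ≤ F z) :
    ∃ C > 0, ∀ x ∈ K, C * G x ≤ F x := by
  -- Since `G ≥ 0`, every positive constant below an admissible one is admissible, so each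
  -- local bound holds for all small `C > 0`, and compactness makes this uniform on `K`.
  have hsmall : ∀ᶠ C in 𝓝 (0 : ℝ), ∀ x ∈ K, 0 < C → C * G x ≤ F x := by
    refine (hK.eventually_forall_of_forall_eventually
      (P := fun C z => z ∈ K → 0 < C → C * G z ≤ F z) fun x hx => ?_).mono
      fun C hC x hx => hC x hx hx
    obtain ⟨c, hc, hcx⟩ := hloc x hx
    filter_upwards [(gt_mem_nhds hc).prod_nhds (eventually_nhdsWithin_iff.1 hcx)]
      with ⟨C, z⟩ ⟨hCc, hz⟩ hzK _
    exact (mul_le_mul_of_nonneg_right hCc.le (hG z hzK)).trans (hz hzK)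
  obtain ⟨C, hC, hCpos⟩ :=
    ((hsmall.filter_mono nhdsWithin_le_nhds).and (self_mem_nhdsWithin (s := Ioi 0))).exists
  exact ⟨C, hCpos, fun x hx => hC x hx hCpos⟩

theorem ContinuousWithinAt.exists_pos_mul_le {X : Type*} [TopologicalSpace X] {K : Set X}
    {F G : X → ℝ} {x : X} (hF : ContinuousWithinAt F K x) (hFx : 0 < F x)
    (hG : ContinuousWithinAt G K x) : ∃ c > 0, ∀ᶠ z in 𝓝[K] x, c * G z ≤ F z := by
  have hFz : ∀ᶠ z in 𝓝[K] x, F x / 2 < F z := hF.eventually (lt_mem_nhds (half_lt_self hFx))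
  have hGz : ∀ᶠ z in 𝓝[K] x, G z < |G x| + 1 :=
    hG.eventually (gt_mem_nhds (by linarith [le_abs_self (G x)]))
  refine ⟨F x / 2 / (|G x| + 1), by positivity, ?_⟩
  filter_upwards [hFz, hGz] with z hFz hGz
  calc F x / 2 / (|G x| + 1) * G z ≤ F x / 2 / (|G x| + 1) * (|G x| + 1) := by gcongr
    _ = F x / 2 := div_mul_cancel₀ _ (by positivity)
    _ ≤ F z := hFz.le

theorem AnalyticAt.exists_pos_mul_pow_le_norm {𝕜 E : Type*} [NontriviallyNormedField 𝕜]
    [NormedAddCommGroup E] [NormedSpace 𝕜 E] {g : 𝕜 → E} {x : 𝕜} {n : ℕ}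
    (hg : AnalyticAt 𝕜 g x) (hn : analyticOrderAt g x ≤ n) :
    ∃ c > 0, ∀ᶠ z in 𝓝 x, c * ‖z - x‖ ^ n ≤ ‖g z‖ := by
  obtain ⟨k, hk⟩ := ENat.ne_top_iff_exists.1 (ne_top_of_le_ne_top (ENat.natCast_ne_top n) hn)
  obtain ⟨u, hu, hux, hgu⟩ := hg.analyticOrderAt_eq_natCast.1 hk.symm
  have hkn : k ≤ n := by exact_mod_cast hk ▸ hn
  have hux' : 0 < ‖u x‖ := norm_pos_iff.2 hux
  have huz : ∀ᶠ z in 𝓝 x, ‖u x‖ / 2 < ‖u z‖ :=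
    hu.continuousAt.norm.eventually (lt_mem_nhds (half_lt_self hux'))
  refine ⟨‖u x‖ / 2, by positivity, ?_⟩
  filter_upwards [hgu, huz, Metric.closedBall_mem_nhds x one_pos] with z hgz huz hz
  rw [mem_closedBall_iff_norm] at hz
  calc ‖u x‖ / 2 * ‖z - x‖ ^ n ≤ ‖u x‖ / 2 * ‖z - x‖ ^ k := by
        gcongr ?_ * ?_; exact pow_le_pow_of_le_one (norm_nonneg _) hz hkn
    _ ≤ ‖u z‖ * ‖z - x‖ ^ k := by gcongr
    _ = ‖g z‖ := by rw [hgz, norm_smul, norm_pow, mul_comm]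

theorem deriv_eq_of_eqOn {𝕜 F : Type*} [NontriviallyNormedField 𝕜] [NormedAddCommGroup F]
    [NormedSpace 𝕜 F] {f g : 𝕜 → F} {s : Set 𝕜} {x : 𝕜} (hs : UniqueDiffWithinAt 𝕜 s x)
    (hf : DifferentiableAt 𝕜 f x) (hg : DifferentiableAt 𝕜 g x) (hfg : EqOn f g s)
    (hx : f x = g x) : deriv f x = deriv g x :=
  hs.eq_deriv s (hf.hasDerivAt.hasDerivWithinAt.congr (fun _ hy => (hfg hy).symm) hx.symm)
    hg.hasDerivAt.hasDerivWithinAt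

theorem AnalyticWithinAt.exists_pos_mul_pow_le_abs {f : ℝ → ℝ} {s : Set ℝ} {x : ℝ} {d β : ℕ}
    (hs : Convex ℝ s) (hs' : (interior s).Nonempty) (hx : x ∈ s)
    (hf : AnalyticWithinAt ℝ f s x) (hzero : ∀ k < d, iteratedDeriv k f x = 0)
    (hd : iteratedDeriv d f x ≠ 0) (hdβ : d ≤ β) :
    ∃ c > 0, ∀ᶠ z in 𝓝[s] x, c * |z - x| ^ β ≤ |f z| := by
  obtain ⟨g, -, hfg, hg⟩ := hf.exists_analyticAt
  have hfg' : EqOn f g s := hfg.mono (subset_insert x s)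
  have horder : analyticOrderAt g x ≤ d := by
    by_contra! hlt
    have hgvan : ∀ i ≤ d, iteratedDeriv i g x = 0 := fun i hi =>
      (natCast_le_analyticOrderAt_iff_iteratedDeriv_eq_zero (n := d + 1) hg).1
        (by exact_mod_cast Order.add_one_le_of_lt hlt) i (Nat.lt_succ_of_le hi)
    apply hd
    cases d with
    | zero => simpa [hfg' hx] using hgvan 0 le_rfl
    | succ k =>
      -- `f` is arbitrary outside `s`, so at a boundary point its derivatives need not be those
      -- of `g`; they agree here because `iteratedDeriv k f` is differentiable at `x` (its
      -- derivative is nonzero), and such a derivative is determined by values on `interior s`.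
      have hsx : UniqueDiffWithinAt ℝ (interior s) x :=
        uniqueDiffWithinAt_convex hs.interior (by rwa [interior_interior])
          (by rw [hs.closure_interior_eq_closure_of_nonempty_interior hs']; exact subset_closure hx)
      rw [iteratedDeriv_succ] at hd ⊢
      rw [deriv_eq_of_eqOn hsx (differentiableAt_of_deriv_ne_zero hd)
        (by simpa only [iteratedDeriv_eq_iterate] using (hg.iterated_deriv k).differentiableAt)
        ((hfg'.mono interior_subset).iteratedDeriv_of_isOpen isOpen_interior k)
        ((hzero k k.lt_succ_self).trans (hgvan k k.le_succ).symm), ← iteratedDeriv_succ]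
      exact hgvan (k + 1) le_rfl
  obtain ⟨c, hc, hcg⟩ := hg.exists_pos_mul_pow_le_norm (horder.trans (by exact_mod_cast hdβ))
  refine ⟨c, hc, ?_⟩
  filter_upwards [nhdsWithin_le_nhds hcg, self_mem_nhdsWithin] with z hz hzs
  simpa only [Real.norm_eq_abs, hfg' hzs] using hz

theorem stmt_0_general (T : ℝ) (hT : 0 < T) (f : ℝ → ℝ)
    (hf : AnalyticOn ℝ f (Set.Icc 0 T))
    (m : ℕ) (hm : 0 < m) (t : Fin m → ℝ) (d : Fin m → ℕ)
    (hzeros : ∀ s ∈ Set.Icc 0 T, f s = 0 ↔ ∃ j, s = t j)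
    (horder : ∀ j, (∀ k < d j, iteratedDeriv k f (t j) = 0) ∧
      iteratedDeriv (d j) f (t j) ≠ 0)
    (β : ℕ) (hβ : β = Finset.univ.sup d) :
    ∃ C > 0, ∀ s ∈ Set.Icc 0 T,
      C * (Finset.univ.inf' (@Finset.univ_nonempty (Fin m) _ (Fin.pos_iff_nonempty.mp hm)) fun j => |s - t j| ^ β)
        ≤ |f s| := by
  refine isCompact_Icc.exists_pos_mul_le (fun s _ => Finset.le_inf' _ _ fun j _ => by positivity)
    fun s hs => ?_
  by_cases hfs : f s = 0
  · obtain ⟨j, rfl⟩ := (hzeros s hs).1 hfs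
    obtain ⟨c, hc, hcj⟩ := (hf _ hs).exists_pos_mul_pow_le_abs (convex_Icc 0 T)
      (by simpa using hT) hs (horder j).1 (horder j).2 (hβ ▸ Finset.le_sup (Finset.mem_univ j))
    exact ⟨c, hc, hcj.mono fun z hz =>
      (mul_le_mul_of_nonneg_left (Finset.inf'_le _ (Finset.mem_univ j)) hc.le).trans hz⟩
  · exact (hf.continuousOn.abs s hs).exists_pos_mul_le (abs_pos.2 hfs)
      (Continuous.finset_inf'_apply _ fun j _ => by fun_prop).continuousWithinAt

/-- If `f` is real analytic on `[0,T]`, not identically zero, with distinct zeros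
`t 1, ..., t m` of orders `d 1, ..., d m`, and `β = max d j`, then there is `C > 0`
with `|f t| ≥ C * min_j |t - t j| ^ β` on `[0,T]`. -/
theorem stmt_0 (T : ℝ) (hT : 0 < T) (f : ℝ → ℝ)
    (hf : AnalyticOn ℝ f (Set.Icc 0 T))
    (m : ℕ) (hm : 0 < m) (t : Fin m → ℝ) (d : Fin m → ℕ)
    (ht : ∀ j, t j ∈ Set.Icc 0 T)
    (htinj : Function.Injective t)
    (hd : ∀ j, 1 ≤ d j)
    (hzeros : ∀ s ∈ Set.Icc 0 T, f s = 0 ↔ ∃ j, s = t j)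
    (horder : ∀ j, (∀ k < d j, iteratedDeriv k f (t j) = 0) ∧
      iteratedDeriv (d j) f (t j) ≠ 0)
    (β : ℕ) (hβ : β = Finset.univ.sup d) :
    ∃ C > 0, ∀ s ∈ Set.Icc 0 T,
      C * (Finset.univ.inf' (@Finset.univ_nonempty (Fin m) _ (Fin.pos_iff_nonempty.mp hm)) fun j => |s - t j| ^ β)
        ≤ |f s| :=
  stmt_0_general T hT f hf m hm t d hzeros horder β hβ
end

section
/- Let f be a real analytic function on [0,T] that is not identically zero, and let Q ⊂ ℝ⁺ × Ω be a measurable set, with Ω ⊂ ℝⁿ a bounded domain. Then there exist constants C > 0 and β > 0 such that for every S ∈ [0,T), for almost every x ∈ Ω, ∫_S^T χ_Q(t,x) |f(t)| dt ≥ C (∫_S^T χ_Q(t,x) dt)^{β+1}. -/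
/-!
Near each point `z` of `[0, T]`, an analytic extension of `f` has finite order `k` at `z` (else `f`
would vanish identically by the identity theorem), so `|f t| ≥ c |t - z| ^ k` near `z`. By
compactness, finitely many such points `Z` suffice: every `t ∈ [0, T]` satisfies
`|f t| ≥ c |t - z| ^ k` for some `z ∈ Z`, with uniform `c` and `k`. If `E ⊆ [0, T]` has measure `m`,
the balls of radius `m / (4 #Z)` around `Z` cover at most half of `E`, and on the other half
`|f| ≥ c (m / (4 #Z)) ^ k`; hence `∫_E |f| ≳ m ^ (k + 1)`. Apply this to the sections
`E = (S, T] ∩ Q_x`.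
-/

open Set MeasureTheory Real Bornology

section

open Filter Topology Metric
open scoped ENNReal

theorem AnalyticAt.exists_pos_mul_dist_pow_le_norm {𝕜 E : Type*} [NontriviallyNormedField 𝕜]
    [NormedAddCommGroup E] [NormedSpace 𝕜 E] {g : 𝕜 → E} {z : 𝕜} (hg : AnalyticAt 𝕜 g z)
    (hord : analyticOrderAt g z ≠ ⊤) :
    ∃ c > 0, ∃ k : ℕ, ∀ᶠ t in 𝓝 z, c * dist t z ^ k ≤ ‖g t‖ := by
  obtain ⟨k, hk⟩ := ENat.ne_top_iff_exists.mp hord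
  obtain ⟨h, hh, hhz, hgh⟩ := hg.analyticOrderAt_eq_natCast.mp hk.symm
  have hhz' : 0 < ‖h z‖ := norm_pos_iff.mpr hhz
  have hh_large : ∀ᶠ t in 𝓝 z, ‖h z‖ / 2 ≤ ‖h t‖ :=
    hh.continuousAt.norm.eventually (eventually_ge_nhds (half_lt_self hhz'))
  refine ⟨‖h z‖ / 2, half_pos hhz', k, ?_⟩
  filter_upwards [hgh, hh_large] with t hgt hht
  rw [hgt, norm_smul, norm_pow, ← dist_eq_norm, mul_comm]
  gcongr

section Interval

variable {E : Type*} [NormedAddCommGroup E] [NormedSpace ℝ E] {f : ℝ → E} {a b : ℝ}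

theorem AnalyticOn.eqOn_zero_Icc_of_eventuallyEq_zero (hf : AnalyticOn ℝ f (Icc a b))
    (hab : a < b) {z : ℝ} (hz : z ∈ Icc a b) (hfz : f =ᶠ[𝓝[Icc a b] z] 0) :
    EqOn f 0 (Icc a b) := by
  obtain ⟨U, hU, hfU⟩ := mem_nhdsWithin_iff_exists_mem_nhds_inter.mp hfz
  have hz_closure : z ∈ closure (Ioo a b) := by rwa [closure_Ioo hab.ne]
  obtain ⟨w, hwU, hw⟩ := mem_closure_iff_nhds.mp hz_closure (interior U) (interior_mem_nhds.mpr hU)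
  have hf_Ioo : AnalyticOnNhd ℝ f (Ioo a b) :=
    isOpen_Ioo.analyticOn_iff_analyticOnNhd.mp (hf.mono Ioo_subset_Icc_self)
  have hfw : f =ᶠ[𝓝 w] 0 := by
    filter_upwards [isOpen_interior.mem_nhds hwU, isOpen_Ioo.mem_nhds hw] with t htU ht
    exact hfU ⟨interior_subset htU, Ioo_subset_Icc_self ht⟩
  refine (hf_Ioo.eqOn_zero_of_preconnected_of_eventuallyEq_zero isPreconnected_Ioo hw
    hfw).of_subset_closure hf.continuousOn continuousOn_const Ioo_subset_Icc_self ?_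
  rw [closure_Ioo hab.ne]

variable [CompleteSpace E]

theorem AnalyticOn.exists_pos_mul_dist_pow_le_norm_Icc (hf : AnalyticOn ℝ f (Icc a b))
    (hab : a < b) (hne : ∃ s ∈ Icc a b, f s ≠ 0) {z : ℝ} (hz : z ∈ Icc a b) :
    ∃ c > 0, ∃ k : ℕ, ∀ᶠ t in 𝓝[Icc a b] z, c * dist t z ^ k ≤ ‖f t‖ := by
  obtain ⟨g, hfg, hg⟩ := analyticWithinAt_iff_exists_analyticAt.mp (hf z hz)
  rw [insert_eq_of_mem hz] at hfg
  have hord : analyticOrderAt g z ≠ ⊤ := by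
    intro htop
    obtain ⟨s, hs, hfs⟩ := hne
    have hg0 : g =ᶠ[𝓝 z] 0 := analyticOrderAt_eq_top.mp htop
    exact hfs (hf.eqOn_zero_Icc_of_eventuallyEq_zero hab hz
      (hfg.trans (nhdsWithin_le_nhds hg0)) hs)
  obtain ⟨c, hc, k, hgk⟩ := hg.exists_pos_mul_dist_pow_le_norm hord
  refine ⟨c, hc, k, ?_⟩
  filter_upwards [hfg, nhdsWithin_le_nhds hgk] with t hft hgt
  rwa [hft]

theorem AnalyticOn.exists_finset_mul_dist_pow_le_norm (hf : AnalyticOn ℝ f (Icc a b))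
    (hab : a < b) (hne : ∃ s ∈ Icc a b, f s ≠ 0) :
    ∃ Z : Finset ℝ, ∃ c > 0, ∃ k > 0, ∀ t ∈ Icc a b, ∃ z ∈ Z, c * dist t z ^ k ≤ ‖f t‖ := by
  choose! c hc k hk using fun z (hz : z ∈ Icc a b) ↦
    hf.exists_pos_mul_dist_pow_le_norm_Icc hab hne hz
  -- Restricting to `dist t z ≤ 1` lets every exponent be raised to a common one.
  obtain ⟨Z, hZ, hcover⟩ := isCompact_Icc.elim_nhdsWithin_subcover
    (fun z ↦ {t | c z * dist t z ^ k z ≤ ‖f t‖ ∧ dist t z ≤ 1})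
    fun z hz ↦ (hk z hz).and (nhdsWithin_le_nhds (closedBall_mem_nhds z one_pos))
  obtain ⟨c₀, hc₀Z, hc₀⟩ : ∃ c₀, (∀ z ∈ Z, c₀ ≤ c z) ∧ 0 < c₀ :=
    ((Z.eventually_all.2 fun z hz ↦ nhdsWithin_le_nhds (eventually_le_nhds (hc z (hZ z hz)))).and
      (eventually_mem_nhdsWithin (a := 0) (s := Ioi 0))).exists
  refine ⟨Z, c₀, hc₀, Z.sup k + 1, Nat.succ_pos _, fun t ht ↦ ?_⟩
  obtain ⟨z, hz, hfz, hdist⟩ := mem_iUnion₂.mp (hcover ht)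
  refine ⟨z, hz, le_trans ?_ hfz⟩
  gcongr ?_ * ?_
  · exact (hc z (hZ z hz)).le
  · exact hc₀Z z hz
  · exact pow_le_pow_of_le_one dist_nonneg hdist ((Z.le_sup hz).trans (Nat.le_succ _))

end Interval

open Finset in
theorem mul_measureReal_pow_le_setIntegral_norm {E : Type*} [NormedAddCommGroup E]
    {f : ℝ → E} {s : Set ℝ} {Z : Finset ℝ} {c : ℝ} {k : ℕ} (hc : 0 ≤ c)
    (hs : MeasurableSet s) (hs_fin : volume s ≠ ∞) (hf : IntegrableOn f s)
    (hbound : ∀ t ∈ s, ∃ z ∈ Z, c * dist t z ^ k ≤ ‖f t‖) :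
    c / (2 * (4 * #Z) ^ k) * volume.real s ^ (k + 1) ≤ ∫ t in s, ‖f t‖ := by
  set m := volume.real s
  set r := m / (4 * #Z) with hr_def
  have hr : 0 ≤ r := by positivity
  set B := ⋃ z ∈ Z, ball z r
  have hB : volume.real B ≤ m / 2 :=
    calc volume.real B ≤ ∑ z ∈ Z, volume.real (ball z r) := measureReal_biUnion_finset_le _ _
      _ = m / 2 * (#Z / #Z) := by simp only [volume_real_ball hr, sum_const, nsmul_eq_mul]; ring
      _ ≤ m / 2 := mul_le_of_le_one_right (by positivity) (div_self_le_one _)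
  have hlow : ∀ t ∈ s \ B, c * r ^ k ≤ ‖f t‖ := by
    rintro t ⟨hts, htB⟩
    obtain ⟨z, hz, hfz⟩ := hbound t hts
    have hrz : r ≤ dist t z := not_lt.mp fun h ↦ htB (mem_iUnion₂.mpr ⟨z, hz, h⟩)
    exact le_trans (by gcongr) hfz
  have hB_fin : volume B ≠ ∞ :=
    (measure_biUnion_lt_top Z.finite_toSet fun z _ ↦ measure_ball_lt_top).ne
  have hsB : m / 2 ≤ volume.real (s \ B) := by
    linarith [le_measureReal_sdiff (μ := volume) (s₁ := s) hB_fin]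
  have hB_meas : MeasurableSet B := Z.measurableSet_biUnion fun _ _ ↦ measurableSet_ball
  calc c / (2 * (4 * #Z) ^ k) * m ^ (k + 1) = c * r ^ k * (m / 2) := by
        rw [hr_def, div_pow, pow_succ]; ring
    _ ≤ c * r ^ k * volume.real (s \ B) := by gcongr
    _ ≤ ∫ t in s \ B, ‖f t‖ :=
      setIntegral_ge_of_const_le_real (hs.diff hB_meas)
        (measure_ne_top_of_subset sdiff_subset hs_fin) hlow (hf.mono_set sdiff_subset).norm
    _ ≤ ∫ t in s, ‖f t‖ :=
      setIntegral_mono_set hf.norm (ae_of_all _ fun _ ↦ norm_nonneg _) sdiff_subset.eventuallyLE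

end

theorem stmt_3_general (n : ℕ) (Ω : Set (EuclideanSpace ℝ (Fin n)))
    (T : ℝ) (hT : 0 < T) (f : ℝ → ℝ)
    (hf : AnalyticOn ℝ f (Set.Icc 0 T))
    (hfne : ∃ s ∈ Set.Icc 0 T, f s ≠ 0)
    (Q : Set (ℝ × EuclideanSpace ℝ (Fin n)))
    (hQ : MeasurableSet Q) :
    ∃ C > 0, ∃ β > (0 : ℝ), ∀ S ∈ Set.Ico 0 T,
      ∀ᵐ x ∂(volume.restrict Ω),
        C * (∫ t in Set.Ioc S T, Set.indicator Q (fun _ => (1 : ℝ)) (t, x)) ^ (β + 1)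
          ≤ ∫ t in Set.Ioc S T, Set.indicator Q (fun _ => (1 : ℝ)) (t, x) * |f t| := by
  obtain ⟨Z, c, hc, k, hk, hbound⟩ := hf.exists_finset_mul_dist_pow_le_norm hT hfne
  obtain ⟨z, hz, -⟩ := hbound 0 ⟨le_rfl, hT.le⟩
  have hZ : (0 : ℝ) < Z.card := by exact_mod_cast Finset.card_pos.mpr ⟨z, hz⟩
  refine ⟨c / (2 * (4 * Z.card) ^ k), by positivity, k, by exact_mod_cast hk,
    fun S hS ↦ ae_of_all _ fun x ↦ ?_⟩
  have hQx : MeasurableSet {t | (t, x) ∈ Q} := measurable_prodMk_right hQ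
  have hE : Ioc S T ∩ {t | (t, x) ∈ Q} ⊆ Icc 0 T := fun t ht ↦ ⟨hS.1.trans ht.1.1.le, ht.1.2⟩
  have hE_int := mul_measureReal_pow_le_setIntegral_norm hc.le (measurableSet_Ioc.inter hQx)
    (measure_ne_top_of_subset hE measure_Icc_lt_top.ne)
    (hf.continuousOn.integrableOn_Icc.mono_set hE) fun t ht ↦ hbound t (hE ht)
  have hχ : ∀ t, Q.indicator (fun _ ↦ (1 : ℝ)) (t, x) = {t | (t, x) ∈ Q}.indicator 1 t :=
    fun _ ↦ rfl
  have hχf : ∀ t, Q.indicator (fun _ ↦ (1 : ℝ)) (t, x) * |f t| =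
      {t | (t, x) ∈ Q}.indicator (|f ·|) t := fun t ↦ by
    by_cases h : (t, x) ∈ Q <;> simp [h]
  simp_rw [hχf, hχ, setIntegral_indicator hQx, Pi.one_apply, setIntegral_const, smul_eq_mul,
    mul_one]
  exact_mod_cast hE_int

/-- Lemma 2.3 (first part): if `f` is real analytic on `[0,T]` and not identically zero,
and `Q ⊆ ℝ⁺ × Ω` is measurable, then there are `C > 0`, `β > 0` such that for every
`S ∈ [0,T)` and a.e. `x ∈ Ω`,
`∫_S^T χ_Q(t,x) |f t| dt ≥ C (∫_S^T χ_Q(t,x) dt)^(β+1)`. -/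
theorem stmt_3 (n : ℕ) (Ω : Set (EuclideanSpace ℝ (Fin n)))
    (hΩ : IsBounded Ω) (hΩmeas : MeasurableSet Ω) (hΩne : Ω.Nonempty)
    (T : ℝ) (hT : 0 < T) (f : ℝ → ℝ)
    (hf : AnalyticOn ℝ f (Set.Icc 0 T))
    (hfne : ∃ s ∈ Set.Icc 0 T, f s ≠ 0)
    (Q : Set (ℝ × EuclideanSpace ℝ (Fin n)))
    (hQ : MeasurableSet Q)
    (hQsub : Q ⊆ Set.Ioi 0 ×ˢ Ω) :
    ∃ C > 0, ∃ β > (0 : ℝ), ∀ S ∈ Set.Ico 0 T,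
      ∀ᵐ x ∂(volume.restrict Ω),
        C * (∫ t in Set.Ioc S T, Set.indicator Q (fun _ => (1 : ℝ)) (t, x)) ^ (β + 1)
          ≤ ∫ t in Set.Ioc S T, Set.indicator Q (fun _ => (1 : ℝ)) (t, x) * |f t| :=
  stmt_3_general n Ω T hT f hf hfne Q hQ
end

section
/- Suppose the triplet (Q,S,T) satisfies the moving observation condition, i.e. ess-inf_{x∈Ω} ∫_S^T χ_Q(t,x) dt =: τ > 0, and let f be a real analytic function on [0,T] not identically zero. Then for every ε with 0 ≤ ε < τ, ess-inf_{x∈Ω} ∫_{S+ε}^T χ_Q(t,x)|f(t)| dt > 0. -/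
open Set MeasureTheory Real Bornology Filter
open scoped ENNReal

/-!
For almost every `x`, the slice of `Q` over `(S + ε, T]` has measure at least `τ - ε`, since the
part over `(S, S + ε]` has measure at most `ε`. The zeros of the analytic function `f` in `[0, T]`
form a null set, so for some `δ > 0` the set where `|f| < δ` has measure at most `(τ - ε) / 2` in
`(S + ε, T]`. On the rest of each slice, of measure at least `(τ - ε) / 2`, we have `|f| ≥ δ`,
which gives the uniform lower bound `δ (τ - ε) / 2`.
-/

lemma AnalyticOn.ae_ne_zero_restrict_Icc {E : Type*} [NormedAddCommGroup E] [NormedSpace ℝ E]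
    {f : ℝ → E} {a b : ℝ} (hf : AnalyticOn ℝ f (Icc a b)) (hne : ∃ s ∈ Icc a b, f s ≠ 0) :
    ∀ᵐ t ∂volume.restrict (Icc a b), f t ≠ 0 := by
  obtain ⟨s, hs, hfs⟩ := hne
  rcases (hs.1.trans hs.2).eq_or_lt with rfl | hab
  · simp
  rw [Measure.restrict_congr_set Ioo_ae_eq_Icc.symm]
  have hf' : AnalyticOnNhd ℝ f (Ioo a b) :=
    isOpen_Ioo.analyticOn_iff_analyticOnNhd.1 (hf.mono Ioo_subset_Icc_self)
  rcases hf'.eqOn_zero_or_eventually_ne_zero_of_preconnected isPreconnected_Ioo with h | h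
  · exact absurd (h.of_subset_closure hf.continuousOn continuousOn_const Ioo_subset_Icc_self
      (closure_Ioo hab.ne).ge hs) hfs
  · exact ae_restrict_le_codiscreteWithin measurableSet_Ioo h

lemma exists_pos_measure_abs_lt_lt {α : Type*} [MeasurableSpace α] {μ : Measure α}
    [IsFiniteMeasure μ] {f : α → ℝ} (hf : AEMeasurable f μ) (h0 : ∀ᵐ x ∂μ, f x ≠ 0)
    {c : ℝ≥0∞} (hc : 0 < c) : ∃ δ > 0, μ {x | |f x| < δ} < c := by
  have hinter : (⋂ r > (0 : ℝ), {x | |f x| < r}) = {x | f x = 0} := by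
    ext x
    simp only [mem_iInter, mem_ofPred_eq]
    refine ⟨fun h => abs_eq_zero.1 (le_antisymm ?_ (abs_nonneg _)),
      fun h r hr => by simpa [h] using hr⟩
    exact le_of_forall_gt_imp_ge_of_dense fun r hr => (h r hr).le
  have hlim := tendsto_measure_biInter_gt (μ := μ) (s := fun r : ℝ => {x | |f x| < r}) (a := 0)
    (fun r _ => nullMeasurableSet_lt hf.abs aemeasurable_const)
    (fun i j _ hij x hx => lt_of_lt_of_le hx hij) ⟨1, one_pos, measure_ne_top _ _⟩
  rw [hinter, show μ {x | f x = 0} = 0 by simpa [ae_iff] using h0] at hlim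
  obtain ⟨δ, hδc, hδ⟩ := ((hlim.eventually (gt_mem_nhds hc)).and self_mem_nhdsWithin).exists
  exact ⟨δ, hδ, hδc⟩

lemma mul_sub_measureReal_lt_le_integral {α : Type*} [MeasurableSpace α] {μ : Measure α}
    [IsFiniteMeasure μ] {g : α → ℝ} (hg0 : 0 ≤ᵐ[μ] g) (hgi : Integrable g μ) {δ : ℝ}
    (hδ : 0 ≤ δ) : δ * (μ.real univ - μ.real {x | g x < δ}) ≤ ∫ x, g x ∂μ := by
  have hsplit : μ.real univ ≤ μ.real {x | g x < δ} + μ.real {x | δ ≤ g x} := by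
    calc μ.real univ = μ.real ({x | g x < δ} ∪ {x | δ ≤ g x}) := by
          congr 1; ext x; simp [lt_or_ge]
      _ ≤ _ := measureReal_union_le _ _
  calc δ * (μ.real univ - μ.real {x | g x < δ}) ≤ δ * μ.real {x | δ ≤ g x} := by
        gcongr; linarith
    _ ≤ ∫ x, g x ∂μ := mul_meas_ge_le_integral_of_nonneg hg0 hgi δ

lemma mul_sub_le_setIntegral_abs {α : Type*} [MeasurableSpace α] {μ : Measure α}
    {f : α → ℝ} {A B : Set α} (hAB : A ⊆ B) (hB : μ B ≠ ∞) (hf : IntegrableOn f B μ)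
    {δ m : ℝ} (hδ : 0 ≤ δ) (hm : 0 ≤ m)
    (hthin : μ.restrict B {x | |f x| < δ} ≤ ENNReal.ofReal m) :
    δ * (μ.real A - m) ≤ ∫ x in A, |f x| ∂μ := by
  have : IsFiniteMeasure (μ.restrict A) :=
    isFiniteMeasure_restrict.2 ((measure_mono hAB).trans_lt hB.lt_top).ne
  have hthinA : (μ.restrict A).real {x | |f x| < δ} ≤ m :=
    ENNReal.toReal_le_of_le_ofReal hm ((Measure.restrict_mono hAB le_rfl _).trans hthin)
  calc δ * (μ.real A - m)
      ≤ δ * ((μ.restrict A).real univ - (μ.restrict A).real {x | |f x| < δ}) := by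
        rw [measureReal_restrict_apply_univ]
        gcongr
    _ ≤ ∫ x in A, |f x| ∂μ :=
        mul_sub_measureReal_lt_le_integral (ae_of_all _ fun x => abs_nonneg _)
          (hf.mono_set hAB).abs hδ

lemma measureReal_Ioc_inter_le_add (E : Set ℝ) {a b ε : ℝ} (hε : 0 ≤ ε) :
    volume.real (Ioc a b ∩ E) ≤ ε + volume.real (Ioc (a + ε) b ∩ E) := by
  calc volume.real (Ioc a b ∩ E) ≤ volume.real (Ioc a (a + ε) ∪ Ioc (a + ε) b ∩ E) := by
        refine measureReal_mono ?_ (measure_union_lt_top measure_Ioc_lt_top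
          (measure_inter_lt_top_of_left_ne_top measure_Ioc_lt_top.ne)).ne
        rintro t ⟨ht, htE⟩
        rcases le_or_gt t (a + ε) with h | h
        · exact Or.inl ⟨ht.1, h⟩
        · exact Or.inr ⟨⟨h, ht.2⟩, htE⟩
    _ ≤ volume.real (Ioc a (a + ε)) + volume.real (Ioc (a + ε) b ∩ E) := measureReal_union_le _ _
    _ = ε + volume.real (Ioc (a + ε) b ∩ E) := by
        rw [Real.volume_real_Ioc_of_le (by linarith), add_sub_cancel_left]

section Slices

variable {α β : Type*} [MeasurableSpace α] [MeasurableSpace β] {μ : Measure α}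
  {Q : Set (α × β)}

lemma setIntegral_indicator_prodMk_mul (hQ : MeasurableSet Q) (s : Set α) (x : β) (g : α → ℝ) :
    ∫ t in s, Q.indicator (fun _ => (1 : ℝ)) (t, x) * g t ∂μ
      = ∫ t in s ∩ (fun t => (t, x)) ⁻¹' Q, g t ∂μ := by
  rw [← setIntegral_indicator (measurable_prodMk_right hQ)]
  congr 1 with t
  by_cases h : (t, x) ∈ Q <;> simp [h]

lemma setIntegral_indicator_prodMk (hQ : MeasurableSet Q) (s : Set α) (x : β) :
    ∫ t in s, Q.indicator (fun _ => (1 : ℝ)) (t, x) ∂μ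
      = μ.real (s ∩ (fun t => (t, x)) ⁻¹' Q) := by
  simpa using setIntegral_indicator_prodMk_mul (μ := μ) hQ s x 1

end Slices

lemma Real.essInf_measure_zero {α : Type*} [MeasurableSpace α] (f : α → ℝ) :
    essInf f (0 : Measure α) = 0 := by
  simp [essInf_eq_sSup]

theorem stmt_4_general (n : ℕ) (Ω : Set (EuclideanSpace ℝ (Fin n)))
    (S T : ℝ) (hS : 0 ≤ S) (f : ℝ → ℝ)
    (hf : AnalyticOn ℝ f (Set.Icc 0 T))
    (hfne : ∃ s ∈ Set.Icc 0 T, f s ≠ 0)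
    (Q : Set (ℝ × EuclideanSpace ℝ (Fin n)))
    (hQ : MeasurableSet Q)
    (τ : ℝ)
    (hτ : τ = essInf (fun x => ∫ t in Set.Ioc S T,
      Set.indicator Q (fun _ => (1 : ℝ)) (t, x)) (volume.restrict Ω))
    (hτpos : 0 < τ) :
    ∀ ε : ℝ, 0 ≤ ε → ε < τ →
      0 < essInf (fun x => ∫ t in Set.Ioc (S + ε) T,
        Set.indicator Q (fun _ => (1 : ℝ)) (t, x) * |f t|) (volume.restrict Ω) := by
  intro ε hε hετ
  simp_rw [setIntegral_indicator_prodMk hQ] at hτ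
  simp_rw [setIntegral_indicator_prodMk_mul hQ]
  set I := Ioc (S + ε) T
  have hI : I ⊆ Icc 0 T := Ioc_subset_Icc_self.trans (Icc_subset_Icc_left (by linarith))
  have hfI : IntegrableOn f I := (hf.continuousOn.integrableOn_compact isCompact_Icc).mono_set hI
  obtain ⟨δ, hδ, hthin⟩ := exists_pos_measure_abs_lt_lt (μ := volume.restrict I)
    ((hf.continuousOn.aemeasurable measurableSet_Icc).mono_measure
      (Measure.restrict_mono hI le_rfl))
    (ae_restrict_of_ae_restrict_of_subset hI (hf.ae_ne_zero_restrict_Icc hfne))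
    (ENNReal.ofReal_pos.2 (half_pos (sub_pos.2 hετ)))
  have hΩ : volume.restrict Ω ≠ 0 := by
    rintro h
    rw [h, Real.essInf_measure_zero] at hτ
    linarith
  have hslice : ∀ᵐ x ∂volume.restrict Ω, τ ≤ volume.real (Ioc S T ∩ (fun t => (t, x)) ⁻¹' Q) :=
    hτ ▸ ae_essInf_le ⟨0, by simp⟩
  have hbdd : ∀ x, ∫ t in I ∩ (fun t => (t, x)) ⁻¹' Q, |f t| ≤ ∫ t in I, |f t| := fun x =>
    setIntegral_mono_set hfI.abs (ae_of_all _ fun t => abs_nonneg _) inter_subset_left.eventuallyLE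
  have := ae_neBot.2 hΩ
  refine (by positivity : 0 < δ * ((τ - ε) / 2)).trans_le
    (le_essInf_of_ae_le _ ?_ (isCoboundedUnder_ge_of_le _ hbdd))
  filter_upwards [hslice] with x hx
  calc δ * ((τ - ε) / 2) ≤ δ * (volume.real (I ∩ (fun t => (t, x)) ⁻¹' Q) - (τ - ε) / 2) := by
        gcongr
        linarith [measureReal_Ioc_inter_le_add ((fun t => (t, x)) ⁻¹' Q) hε (a := S) (b := T)]
    _ ≤ _ := mul_sub_le_setIntegral_abs inter_subset_left measure_Ioc_lt_top.ne hfI hδ.le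
        (by linarith) hthin.le

/-- Lemma 2.3 (second part): if `(Q,S,T)` satisfies the moving observation condition
with `τ := ess-inf_x ∫_S^T χ_Q(t,x) dt > 0` and `f` is real analytic on `[0,T]`,
not identically zero, then for every `0 ≤ ε < τ`,
`ess-inf_x ∫_{S+ε}^T χ_Q(t,x) |f t| dt > 0`. -/
theorem stmt_4 (n : ℕ) (Ω : Set (EuclideanSpace ℝ (Fin n)))
    (hΩ : IsBounded Ω) (hΩmeas : MeasurableSet Ω) (hΩne : Ω.Nonempty)
    (S T : ℝ) (hS : 0 ≤ S) (hST : S < T) (f : ℝ → ℝ)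
    (hf : AnalyticOn ℝ f (Set.Icc 0 T))
    (hfne : ∃ s ∈ Set.Icc 0 T, f s ≠ 0)
    (Q : Set (ℝ × EuclideanSpace ℝ (Fin n)))
    (hQ : MeasurableSet Q) (hQne : Q.Nonempty)
    (hQsub : Q ⊆ Set.Ioi 0 ×ˢ Ω)
    (τ : ℝ)
    (hτ : τ = essInf (fun x => ∫ t in Set.Ioc S T,
      Set.indicator Q (fun _ => (1 : ℝ)) (t, x)) (volume.restrict Ω))
    (hτpos : 0 < τ) :
    ∀ ε : ℝ, 0 ≤ ε → ε < τ →
      0 < essInf (fun x => ∫ t in Set.Ioc (S + ε) T,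
        Set.indicator Q (fun _ => (1 : ℝ)) (t, x) * |f t|) (volume.restrict Ω) :=
  stmt_4_general n Ω S T hS f hf hfne Q hQ τ hτ hτpos
end
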